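/- If C2 ∩ Π1 ⊂ D1 (the disc of C1), then the section of the convex hull K = conv(C1 ∪ C2) by the plane Π1 equals D1. -/
import Mathlib

noncomputable section

abbrev E3 := EuclideanSpace ℝ (Fin 3)

/-- `Π` is an affine plane in `ℝ³`. -/
def IsPlane (P : AffineSubspace ℝ E3) : Prop := Module.finrank ℝ P.direction = 2

/-- `C` is a circle lying in the plane `P`. -/
def IsCircleIn (P : AffineSubspace ℝ E3) (C : Set E3) : Prop :=
  ∃ (c : E3) (r : ℝ), c ∈ P ∧ 0 < r ∧ C = {x | x ∈ P ∧ dist x c = r}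

lemma circle_nonempty {P : AffineSubspace ℝ E3} {C : Set E3} (hP : IsPlane P)
    (hC : IsCircleIn P C) : C.Nonempty := by
  obtain ⟨c, r, hc, hr, rfl⟩ := hC
  have hd : P.direction ≠ ⊥ := by
    intro hbot
    rw [IsPlane, hbot] at hP
    simp at hP
  obtain ⟨v, hv, hv0⟩ := Submodule.exists_mem_ne_zero_of_ne_bot hd
  refine ⟨(r / ‖v‖) • v +ᵥ c, P.vadd_mem_of_mem_direction (Submodule.smul_mem _ _ hv) hc, ?_⟩
  rw [dist_eq_norm, vadd_eq_add, add_sub_cancel_right, norm_smul]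
  have : ‖v‖ ≠ 0 := norm_ne_zero_iff.mpr hv0
  rw [Real.norm_eq_abs, abs_div, abs_of_pos hr, abs_of_pos (norm_pos_iff.mpr hv0)]
  field_simp

/-- If `conv C₂ ∩ Π₁ ⊆ D₁` (the disc of `C₁`), then the section of `K = conv (C₁ ∪ C₂)`
by the plane `Π₁` equals `D₁`. -/
theorem stmt_3 (P₁ P₂ : AffineSubspace ℝ E3) (hP₁ : IsPlane P₁) (hP₂ : IsPlane P₂)
    (hne : P₁ ≠ P₂) (C₁ C₂ : Set E3) (hC₁ : IsCircleIn P₁ C₁) (hC₂ : IsCircleIn P₂ C₂)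
    (h : convexHull ℝ C₂ ∩ (P₁ : Set E3) ⊆ convexHull ℝ C₁) :
    convexHull ℝ (C₁ ∪ C₂) ∩ (P₁ : Set E3) = convexHull ℝ C₁ := by
  have hC₁P : C₁ ⊆ (P₁ : Set E3) := by
    obtain ⟨c, r, hc, hr, rfl⟩ := hC₁
    exact fun x hx => hx.1
  have hhullP : convexHull ℝ C₁ ⊆ (P₁ : Set E3) :=
    convexHull_min hC₁P (P₁.convex)
  apply Set.Subset.antisymm
  · rintro x ⟨hx, hxP⟩
    rw [convexHull_union (circle_nonempty hP₁ hC₁) (circle_nonempty hP₂ hC₂),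
      mem_convexJoin] at hx
    obtain ⟨a, ha, b, hb, u, v, hu, hv, huv, hx⟩ := hx
    have haP : a ∈ P₁ := hhullP ha
    rcases eq_or_lt_of_le hv with hv0 | hvpos
    · have : u = 1 := by linarith
      subst this
      rw [← hv0] at hx
      simp at hx
      rwa [← hx]
    · have hbP : b ∈ P₁ := by
        have hb' : b = (v⁻¹ • (x -ᵥ a)) +ᵥ a := by
          have hvne : v ≠ 0 := ne_of_gt hvpos
          have hu1 : u = 1 - v := by linarith
          subst hu1
          rw [← hx]
          simp only [vsub_eq_sub, vadd_eq_add]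
          rw [show (1 - v) • a + v • b - a = v • (b - a) by module,
            inv_smul_smul₀ hvne]
          abel
        rw [hb']
        exact P₁.smul_vsub_vadd_mem _ hxP haP haP
      have hbD : b ∈ convexHull ℝ C₁ := h ⟨hb, hbP⟩
      rw [← hx]
      exact (convex_convexHull ℝ C₁) ha hbD hu hv huv
  · exact Set.subset_inter (convexHull_mono Set.subset_union_left) hhullP
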